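/- arXiv:2306.16362 — 7 statements merged into one kernel-verified Lean document; each statement's English description precedes it below -/
import Mathlib

section
/- For w ∈ ℂ, the derivative f'(w) = e^{w}·(a·cosh(a·w) + sinh(a·w)) vanishes if and only if there exists k ∈ ℤ such that w = ξ_a + i·kπ/a, where ξ_a = (1/(2a))·ln((1−a)/(1+a)). -/
/-!
Multiplying `a cosh z + sinh z` by `2 eᶻ` gives `(1 + a) e^{2z} - (1 - a)`, so with `z = a w` the
critical points of `f` are the solutions of `e^{2aw} = (1 - a)/(1 + a)`. As `0 < a < 1` the right
side is a positive real, namely `e^{2a ξ_a}`, and the periodicity of `exp` gives `w = ξ_a + ikπ/a`.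
-/

open Complex Real

namespace Complex

theorem two_mul_exp_mul_mul_cosh_add_sinh (c z : ℂ) :
    2 * exp z * (c * cosh z + sinh z) = exp (2 * z) * (1 + c) - (1 - c) := by
  have hprod : exp z * exp (-z) = 1 := by rw [← exp_add, add_neg_cancel, exp_zero]
  have hsq : exp (2 * z) = exp z * exp z := by rw [two_mul, exp_add]
  calc 2 * exp z * (c * cosh z + sinh z) = exp z * (c * (2 * cosh z) + 2 * sinh z) := by ring
    _ = exp z * (c * (exp z + exp (-z)) + (exp z - exp (-z))) := by rw [two_cosh, two_sinh]
    _ = exp (2 * z) * (1 + c) - (1 - c) := by linear_combination (c - 1) * hprod - (1 + c) * hsq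

theorem mul_cosh_add_sinh_eq_zero_iff {c : ℂ} (hc : 1 + c ≠ 0) (z : ℂ) :
    c * cosh z + sinh z = 0 ↔ exp (2 * z) = (1 - c) / (1 + c) := by
  rw [eq_div_iff hc, ← sub_eq_zero (a := exp (2 * z) * (1 + c)), ← two_mul_exp_mul_mul_cosh_add_sinh, mul_eq_zero,
    or_iff_right (mul_ne_zero two_ne_zero (exp_ne_zero z))]

theorem exp_two_mul_eq_exp_iff {z L : ℂ} :
    exp (2 * z) = exp L ↔ ∃ n : ℤ, z = L / 2 + n * π * I := by
  rw [exp_eq_exp_iff_exists_int]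
  exact exists_congr fun n => ⟨fun h => by linear_combination h / 2, fun h => by linear_combination 2 * h⟩

end Complex

theorem stmt_2_general (a : ℝ) (ha0 : 0 < a) (ha1 : a < 1)
    (ξa : ℝ) (hξa : ξa = (1 / (2 * a)) * Real.log ((1 - a) / (1 + a))) :
    ∀ w : ℂ,
      Complex.exp w * (a * Complex.cosh (a * w) + Complex.sinh (a * w)) = 0 ↔
        ∃ k : ℤ, w = (ξa : ℂ) + Complex.I * (k * Real.pi / a) := by
  intro w
  have ha : (a : ℂ) ≠ 0 := ofReal_ne_zero.mpr ha0.ne'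
  have hpos : 0 < (1 - a) / (1 + a) := div_pos (by linarith) (by linarith)
  have hlog : (1 - a : ℂ) / (1 + a) = Complex.exp (2 * a * ξa) := by
    have hexp : Real.exp (2 * a * ξa) = (1 - a) / (1 + a) := by
      rw [hξa, ← mul_assoc, mul_one_div_cancel (by positivity), one_mul, Real.exp_log hpos]
    exact_mod_cast hexp.symm
  rw [mul_eq_zero, or_iff_right (exp_ne_zero w),
    mul_cosh_add_sinh_eq_zero_iff (by exact_mod_cast (by linarith : (1 + a) ≠ 0)), hlog, mul_assoc,
    exp_two_mul_eq_exp_iff]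
  refine exists_congr fun k => ⟨fun h => ?_, fun h => ?_⟩
  · field_simp
    linear_combination h
  · rw [h]
    field_simp

theorem stmt_2 (a : ℝ) (ha0 : 0 < a) (ha1 : a < 1)
    (f : ℂ → ℂ) (hf : ∀ w : ℂ, f w = Complex.sinh (a * w) * Complex.exp w)
    (ξa : ℝ) (hξa : ξa = (1 / (2 * a)) * Real.log ((1 - a) / (1 + a))) :
    ∀ w : ℂ,
      Complex.exp w * (a * Complex.cosh (a * w) + Complex.sinh (a * w)) = 0 ↔
        ∃ k : ℤ, w = (ξa : ℂ) + Complex.I * (k * Real.pi / a) :=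
  stmt_2_general a ha0 ha1 ξa hξa
end

section
/- For every k ∈ ℤ, the value of f at the critical point w_k = ξ_a + i·kπ/a equals f(w_k) = x_a·(−1)^k·(cos(kπ/a) + i·sin(kπ/a)), where ξ_a = (1/(2a))·ln((1−a)/(1+a)) and x_a = −(a/(1+a))·((1−a)/(1+a))^{(1−a)/(2a)}. -/
/-!
Write `w = ξ + iθ` with `aθ = kπ`. Since `sinh` is `iπ`-antiperiodic, `sinh (a w) = (-1)^k sinh (a ξ)`,
while `exp w = e^ξ e^{iθ}`; so everything reduces to the real number `sinh (a ξ) e^ξ`. With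
`r = (1 - a)/(1 + a)` we have `e^{2aξ} = r`, hence `sinh (a ξ) e^ξ = (r - 1)/2 · r^{(1-a)/(2a)}`,
and `(r - 1)/2 = -a/(1 + a)`.
-/

open Complex Real

theorem Complex.sinh_add_int_mul_pi_mul_I (z : ℂ) (k : ℤ) :
    sinh (z + k * (π * I)) = (-1) ^ k * sinh z := by
  rw [sinh_antiperiodic.add_int_mul_eq, Int.cast_negOnePow]

theorem Real.sinh_half_log_mul_rpow {r : ℝ} (hr : 0 < r) (p : ℝ) :
    Real.sinh (Real.log r / 2) * r ^ p = (r - 1) / 2 * r ^ (p - 1 / 2) := by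
  have hsqrt : Real.exp (Real.log r / 2) = r ^ (1 / 2 : ℝ) := by
    rw [Real.rpow_def_of_pos hr]; ring_nf
  rw [Real.sinh_eq, Real.exp_neg, hsqrt, ← Real.rpow_neg hr.le]
  have h1 : r ^ (1 / 2 : ℝ) * r ^ p = r ^ (p - 1 / 2) * r := by
    rw [← Real.rpow_add hr, ← Real.rpow_add_one hr.ne']; ring_nf
  have h2 : r ^ (-(1 / 2) : ℝ) * r ^ p = r ^ (p - 1 / 2) := by
    rw [← Real.rpow_add hr]; ring_nf
  linear_combination (h1 - h2) / 2

theorem Real.sinh_mul_mul_exp_one_div_two_mul_log {a r : ℝ} (ha : a ≠ 0) (hr : 0 < r) :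
    Real.sinh (a * (1 / (2 * a) * Real.log r)) * Real.exp (1 / (2 * a) * Real.log r) =
      (r - 1) / 2 * r ^ ((1 - a) / (2 * a)) := by
  have hexp : Real.exp (1 / (2 * a) * Real.log r) = r ^ (1 / (2 * a)) := by
    rw [Real.rpow_def_of_pos hr, mul_comm]
  have harg : a * (1 / (2 * a) * Real.log r) = Real.log r / 2 := by field_simp
  have hexpo : (1 - a) / (2 * a) = 1 / (2 * a) - 1 / 2 := by field_simp
  rw [harg, hexp, hexpo, Real.sinh_half_log_mul_rpow hr]

theorem Complex.sinh_mul_mul_exp_of_mul_eq_int_mul_pi {a θ : ℝ} {k : ℤ} (h : a * θ = k * π)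
    (z : ℂ) :
    sinh (a * (z + I * θ)) * exp (z + I * θ) =
      sinh (a * z) * exp z * (-1) ^ k * (Real.cos θ + I * Real.sin θ) := by
  have harg : (a : ℂ) * (z + I * θ) = a * z + k * (π * I) := by
    rw [mul_add, ← mul_assoc, mul_comm _ I, mul_assoc, ← ofReal_mul, h]; push_cast; ring
  rw [harg, sinh_add_int_mul_pi_mul_I, exp_add, mul_comm I, exp_mul_I, ← ofReal_cos, ← ofReal_sin]
  ring

theorem stmt_3 (a : ℝ) (ha0 : 0 < a) (ha1 : a < 1)
    (f : ℂ → ℂ) (hf : ∀ w : ℂ, f w = Complex.sinh (a * w) * Complex.exp w)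
    (ξa : ℝ) (hξa : ξa = (1 / (2 * a)) * Real.log ((1 - a) / (1 + a)))
    (xa : ℝ) (hxa : xa = -(a / (1 + a)) * ((1 - a) / (1 + a)) ^ ((1 - a) / (2 * a))) :
    ∀ k : ℤ,
      f ((ξa : ℂ) + Complex.I * (k * Real.pi / a)) =
        (xa : ℂ) * (-1) ^ k *
          (Real.cos (k * Real.pi / a) + Complex.I * Real.sin (k * Real.pi / a)) := by
  intro k
  have hr : 0 < (1 - a) / (1 + a) := div_pos (by linarith) (by linarith)
  have hr1 : ((1 - a) / (1 + a) - 1) / 2 = -(a / (1 + a)) := by field_simp; ring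
  have hcrit : Real.sinh (a * ξa) * Real.exp ξa = xa := by
    rw [hξa, hxa, Real.sinh_mul_mul_exp_one_div_two_mul_log ha0.ne' hr, hr1]
  have hθ : a * (k * π / a) = k * π := by field_simp
  rw [hf, ← hcrit]
  exact_mod_cast Complex.sinh_mul_mul_exp_of_mul_eq_int_mul_pi hθ ξa
end

section
/- The real function g(t) = sinh(a·t)·e^{t} is strictly increasing on the interval [ξ_a, ∞) and maps [ξ_a, ∞) bijectively onto [x_a, ∞), where ξ_a = (1/(2a))·ln((1−a)/(1+a)) and x_a = −(a/(1+a))·((1−a)/(1+a))^{(1−a)/(2a)}. (The inverse of this restriction is the real branch ψ₀ : [x_a, ∞) → [ξ_a, ∞).) -/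
/-! Writing `sinh (a t) eᵗ = (e^{(1+a)t} - e^{(1-a)t}) / 2`, the derivative
`((1+a) e^{(1+a)t} - (1-a) e^{(1-a)t}) / 2` is positive exactly when `e^{2at} > (1-a)/(1+a)`,
i.e. for `t > ξ_a`. At `ξ_a` one has `e^{(1+a)ξ_a} = r e^{(1-a)ξ_a}` with `r = (1-a)/(1+a)`, whence
`g ξ_a = (r - 1)/2 · r^{(1-a)/(2a)} = x_a`. Since `g → ∞`, the intermediate value theorem
gives `g '' [ξ_a, ∞) = [x_a, ∞)`. -/

open Real Set Filter

theorem sinh_mul_mul_exp_eq (a t : ℝ) :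
    sinh (a * t) * exp t = (exp ((1 + a) * t) - exp ((1 - a) * t)) / 2 := by
  rw [sinh_eq, sub_div, sub_mul, div_mul_eq_mul_div, div_mul_eq_mul_div, ← exp_add, ← exp_add]
  ring_nf

theorem hasDerivAt_sinh_mul_mul_exp (a t : ℝ) :
    HasDerivAt (fun t => sinh (a * t) * exp t)
      (((1 + a) * exp ((1 + a) * t) - (1 - a) * exp ((1 - a) * t)) / 2) t := by
  simp only [sinh_mul_mul_exp_eq]
  have hexp (c : ℝ) : HasDerivAt (fun t => exp (c * t)) (c * exp (c * t)) t := by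
    simpa [mul_comm c] using ((hasDerivAt_id t).const_mul c).exp
  exact ((hexp (1 + a)).sub (hexp (1 - a))).div_const 2

theorem sub_mul_exp_lt_add_mul_exp {a t : ℝ} (ha0 : 0 < a) (ha1 : a < 1)
    (ht : 1 / (2 * a) * log ((1 - a) / (1 + a)) < t) :
    (1 - a) * exp ((1 - a) * t) < (1 + a) * exp ((1 + a) * t) := by
  have hr : 0 < (1 - a) / (1 + a) := div_pos (by linarith) (by linarith)
  have hlog : log ((1 - a) / (1 + a)) < 2 * a * t := by
    rwa [one_div, inv_mul_lt_iff₀ (by positivity)] at ht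
  have hratio : (1 - a) / (1 + a) < exp (2 * a * t) := (log_lt_iff_lt_exp hr).mp hlog
  calc (1 - a) * exp ((1 - a) * t)
      = (1 - a) / (1 + a) * ((1 + a) * exp ((1 - a) * t)) := by field_simp
    _ < exp (2 * a * t) * ((1 + a) * exp ((1 - a) * t)) := by gcongr
    _ = (1 + a) * exp ((1 + a) * t) := by rw [mul_left_comm, ← exp_add]; ring_nf

theorem strictMonoOn_sinh_mul_mul_exp {a : ℝ} (ha0 : 0 < a) (ha1 : a < 1) :
    StrictMonoOn (fun t => sinh (a * t) * exp t)
      (Ici (1 / (2 * a) * log ((1 - a) / (1 + a)))) := by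
  refine strictMonoOn_of_deriv_pos (convex_Ici _) (by fun_prop) fun t ht => ?_
  rw [interior_Ici] at ht
  rw [(hasDerivAt_sinh_mul_mul_exp a t).deriv]
  linarith [sub_mul_exp_lt_add_mul_exp ha0 ha1 ht]

theorem sinh_mul_mul_exp_of_two_mul_eq_log {a ξ : ℝ} (ha0 : 0 < a) (ha1 : a < 1)
    (hξ : 2 * a * ξ = log ((1 - a) / (1 + a))) :
    sinh (a * ξ) * exp ξ = -(a / (1 + a)) * ((1 - a) / (1 + a)) ^ ((1 - a) / (2 * a)) := by
  set r := (1 - a) / (1 + a) with hr_def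
  have hr : 0 < r := div_pos (by linarith) (by linarith)
  have hshift : exp ((1 + a) * ξ) = r * exp ((1 - a) * ξ) := by
    rw [← exp_log hr, ← exp_add]
    congr 1
    linear_combination hξ
  have hpow : exp ((1 - a) * ξ) = r ^ ((1 - a) / (2 * a)) := by
    rw [rpow_def_of_pos hr, ← hξ]
    congr 1
    field_simp
  rw [sinh_mul_mul_exp_eq, hshift, hpow, hr_def]
  field_simp
  ring

theorem tendsto_sinh_mul_mul_exp_atTop {a : ℝ} (ha : 0 < a) :
    Tendsto (fun t => sinh (a * t) * exp t) atTop atTop := by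
  have hsinh : Tendsto (fun t => sinh (a * t)) atTop atTop := by
    refine tendsto_atTop_mono' atTop ?_ (tendsto_id.const_mul_atTop ha)
    filter_upwards [eventually_ge_atTop 0] with t ht
    exact self_le_sinh_iff.mpr (by positivity)
  exact hsinh.atTop_mul_atTop₀ tendsto_exp_atTop

theorem stmt_6 (a : ℝ) (ha0 : 0 < a) (ha1 : a < 1)
    (g : ℝ → ℝ) (hg : ∀ t : ℝ, g t = Real.sinh (a * t) * Real.exp t)
    (ξa : ℝ) (hξa : ξa = (1 / (2 * a)) * Real.log ((1 - a) / (1 + a)))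
    (xa : ℝ) (hxa : xa = -(a / (1 + a)) * ((1 - a) / (1 + a)) ^ ((1 - a) / (2 * a))) :
    StrictMonoOn g (Set.Ici ξa) ∧ Set.BijOn g (Set.Ici ξa) (Set.Ici xa) := by
  have hg' : g = fun t => sinh (a * t) * exp t := funext hg
  have hmono : StrictMonoOn g (Ici ξa) := hg' ▸ hξa ▸ strictMonoOn_sinh_mul_mul_exp ha0 ha1
  have hmin : g ξa = xa := by
    rw [hg, hxa]
    exact sinh_mul_mul_exp_of_two_mul_eq_log ha0 ha1 (by rw [hξa]; field_simp)
  have hcont : Continuous g := hg' ▸ by fun_prop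
  have himage : g '' Ici ξa = Ici xa := hmin ▸ hcont.continuousOn.image_Ici_of_monotoneOn
    hmono.monotoneOn (hg' ▸ tendsto_sinh_mul_mul_exp_atTop ha0)
  exact ⟨hmono, himage ▸ hmono.injOn.bijOn_image⟩
end

section
/- For every η with 0 < η < π/(1+a), the value of f at the point Ξ(η) + i·η, where Ξ(η) = (1/(2a))·ln(sin((1−a)η)/sin((1+a)η)), is real and equals −(sin(2aη)/(2·sin((1+a)η)))·(sin((1−a)η)/sin((1+a)η))^{(1−a)/(2a)}, and this value is strictly negative. -/
open Complex Real

/-!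
Writing `w = ξ + iη`, one has `f w = (e^{(1+a)w} - e^{(1-a)w}) / 2`. The choice `ξ = Ξ η` means
`e^{2aξ} = sin((1-a)η) / sin((1+a)η)`, which says exactly that the imaginary parts
`e^{(1±a)ξ} sin((1±a)η)` of the two exponentials agree, so `f w` is real. Its value is then
`(e^{(1+a)ξ} cos((1+a)η) - e^{(1-a)ξ} cos((1-a)η)) / 2`, and eliminating `e^{(1+a)ξ}` with the
same identity turns it into `-e^{(1-a)ξ} sin(2aη) / (2 sin((1+a)η))` by the subtraction formula
for `sin`; finally `e^{(1-a)ξ}` is the stated power of the sine ratio.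
-/

theorem sinh_mul_mul_exp (a w : ℂ) :
    Complex.sinh (a * w) * Complex.exp w =
      (Complex.exp ((1 + a) * w) - Complex.exp ((1 - a) * w)) / 2 := by
  rw [Complex.sinh, add_mul, sub_mul, one_mul, Complex.exp_add, Complex.exp_sub, Complex.exp_neg]
  field_simp

theorem exp_mul_sub_exp_mul_of_im_eq {p q x y : ℝ} (hp : Real.sin (p * y) ≠ 0)
    (h : Real.exp (p * x) * Real.sin (p * y) = Real.exp (q * x) * Real.sin (q * y)) :
    Complex.exp (p * (x + y * I)) - Complex.exp (q * (x + y * I)) =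
      ((Real.exp (q * x) * Real.sin ((q - p) * y) / Real.sin (p * y) : ℝ) : ℂ) := by
  apply Complex.ext
  · rw [Complex.ofReal_re]
    simp only [sub_re, exp_re, mul_re, ofReal_re, add_re, I_re, mul_zero, ofReal_im, I_im,
      mul_one, sub_self, add_zero, add_im, mul_im, zero_add, zero_mul, sub_zero]
    rw [eq_div_iff hp, sub_mul, sub_mul, Real.sin_sub]
    linear_combination Real.cos (p * y) * h
  · rw [Complex.ofReal_im]
    simp only [sub_im, exp_im, mul_re, ofReal_re, add_re, I_re, mul_zero, ofReal_im, I_im,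
      mul_one, sub_self, add_zero, add_im, mul_im, zero_add, zero_mul, sub_zero]
    linarith

theorem exp_mul_div_mul_log {c r : ℝ} (hc : c ≠ 0) (hr : 0 < r) :
    Real.exp (c * (1 / c * Real.log r)) = r := by
  rw [← mul_assoc, mul_one_div_cancel hc, one_mul, Real.exp_log hr]

theorem stmt_10 (a : ℝ) (ha0 : 0 < a) (ha1 : a < 1)
    (f : ℂ → ℂ) (hf : ∀ w : ℂ, f w = Complex.sinh (a * w) * Complex.exp w)
    (Ξ : ℝ → ℝ)
    (hΞ : ∀ η : ℝ, Ξ η = (1 / (2 * a)) * Real.log (Real.sin ((1 - a) * η) / Real.sin ((1 + a) * η))) :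
    ∀ η : ℝ, 0 < η → η < Real.pi / (1 + a) →
      f ((Ξ η : ℂ) + (η : ℂ) * Complex.I) =
          ((-(Real.sin (2 * a * η) / (2 * Real.sin ((1 + a) * η))) *
              (Real.sin ((1 - a) * η) / Real.sin ((1 + a) * η)) ^ ((1 - a) / (2 * a)) : ℝ) : ℂ) ∧
        -(Real.sin (2 * a * η) / (2 * Real.sin ((1 + a) * η))) *
            (Real.sin ((1 - a) * η) / Real.sin ((1 + a) * η)) ^ ((1 - a) / (2 * a)) < 0 := by
  intro η hη0 hη1
  have hη : (1 + a) * η < π := by rwa [lt_div_iff₀ (by linarith), mul_comm] at hη1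
  have hsin_add : 0 < Real.sin ((1 + a) * η) := sin_pos_of_pos_of_lt_pi (by positivity) hη
  have hsin_sub : 0 < Real.sin ((1 - a) * η) :=
    sin_pos_of_pos_of_lt_pi (mul_pos (by linarith) hη0) (by nlinarith)
  have hsin_two : 0 < Real.sin (2 * a * η) :=
    sin_pos_of_pos_of_lt_pi (by positivity) (by nlinarith)
  have hratio := div_pos hsin_sub hsin_add
  have hexp_two : Real.exp (2 * a * Ξ η) = Real.sin ((1 - a) * η) / Real.sin ((1 + a) * η) := by
    rw [hΞ]; exact exp_mul_div_mul_log (by positivity) hratio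
  have hrpow : (Real.sin ((1 - a) * η) / Real.sin ((1 + a) * η)) ^ ((1 - a) / (2 * a)) =
      Real.exp ((1 - a) * Ξ η) := by
    rw [rpow_def_of_pos hratio, hΞ]; ring_nf
  have him : Real.exp ((1 + a) * Ξ η) * Real.sin ((1 + a) * η) =
      Real.exp ((1 - a) * Ξ η) * Real.sin ((1 - a) * η) := by
    rw [show (1 + a) * Ξ η = (1 - a) * Ξ η + 2 * a * Ξ η by ring, Real.exp_add, hexp_two,
      mul_assoc, div_mul_cancel₀ _ hsin_add.ne']
  refine ⟨?_, ?_⟩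
  · have hdiff := exp_mul_sub_exp_mul_of_im_eq hsin_add.ne' him
    rw [show (1 - a - (1 + a)) * η = -(2 * a * η) by ring, Real.sin_neg] at hdiff
    push_cast at hdiff
    rw [hf, sinh_mul_mul_exp, hdiff, hrpow]
    push_cast
    ring
  · rw [neg_mul, neg_lt_zero]
    exact mul_pos (div_pos hsin_two (by positivity)) (rpow_pos_of_pos hratio _)
end

section
/- Define Ω₀ ⊂ ℂ as the union of: the set of ξ + iη with 0 < η < π/(1+a) and e^{(1+a)ξ}·sin((1+a)η) > e^{(1−a)ξ}·sin((1−a)η); the set of real ξ with ξ > ξ_a; and the set of ξ + iη with −π/(1+a) < η < 0 and e^{(1+a)ξ}·sin((1+a)η) < e^{(1−a)ξ}·sin((1−a)η). Then f is injective on Ω₀ and the image f(Ω₀) equals ℂ ∖ (−∞, x_a]; that is, f restricted to Ω₀ is a bijection onto ℂ ∖ (−∞, x_a]. -/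
/-!
Write `sinh (a w) e^w = (e^{(1+a)w} - e^{(1-a)w}) / 2 =: f w`. Since `f` commutes with conjugation
and is real on `ℝ`, it suffices to treat the upper sheet `{w ∈ S | 0 < Im f w}` of the strip
`S = {0 < Im w < π/(1+a)}`, and the half-line `(ξa, ∞)`.

On `S` we have `-2 f = exp ∘ L` for `L w = (1-a) w + log (1 - e^{2aw})`. Its imaginary part lies in
`(-π, π)`, where `exp` is injective, and its derivative `(1+a) + 2a / (e^{2aw} - 1)` has negative
imaginary part, which makes `L` injective on the convex set `S`. So `f` is injective on `S`.
The image of the upper sheet is open (open mapping theorem) and closed in the upper half-plane: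
points of the closed strip whose image has modulus in `[δ, C]` form a compact set, and the two
boundary lines of `S` are mapped into `ℝ` and into the lower half-plane. By connectedness that
image is the whole upper half-plane. On `ℝ`, `f` is strictly increasing beyond its critical point
`ξa`, where it takes the value `xa`, and tends to `+∞`.
-/

open Complex Set Filter ComplexConjugate
open scoped Real

theorem Set.BijOn.union_of_disjoint {α β : Type*} {f : α → β} {s₁ s₂ : Set α} {t₁ t₂ : Set β}
    (h₁ : BijOn f s₁ t₁) (h₂ : BijOn f s₂ t₂) (ht : Disjoint t₁ t₂) :
    BijOn f (s₁ ∪ s₂) (t₁ ∪ t₂) :=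
  h₁.union h₂ <| (injOn_union ((ht.preimage f).mono h₁.mapsTo h₂.mapsTo)).2
    ⟨h₁.injOn, h₂.injOn, fun _ hx _ hy => ht.ne_of_mem (h₁.mapsTo hx) (h₂.mapsTo hy)⟩

theorem StrictMonoOn.bijOn_Ioi {f : ℝ → ℝ} {c : ℝ} (hf : StrictMonoOn f (Ici c))
    (hcont : ContinuousOn f (Ici c)) (htop : Tendsto f atTop atTop) :
    BijOn f (Ioi c) (Ioi (f c)) := by
  refine ⟨fun x hx => hf self_mem_Ici (mem_Ici.2 hx.le) hx, hf.injOn.mono Ioi_subset_Ici_self,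
    fun y hy => ?_⟩
  obtain ⟨b, hyb, hcb⟩ := ((htop.eventually_ge_atTop y).and (eventually_ge_atTop c)).exists
  obtain ⟨x, hx, rfl⟩ := intermediate_value_Ioc hcb (hcont.mono Icc_subset_Ici_self) ⟨hy, hyb⟩
  exact ⟨x, hx.1, rfl⟩

theorem Convex.injOn_of_hasDerivAt_im_neg {s : Set ℂ} (hs : Convex ℝ s) {g g' : ℂ → ℂ}
    (hg : ∀ z ∈ s, HasDerivAt g (g' z) z) (hg' : ∀ z ∈ s, (g' z).im < 0) : InjOn g s := by
  intro z₁ hz₁ z₂ hz₂ heq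
  by_contra hne
  set d := z₂ - z₁
  have hd : d ≠ 0 := sub_ne_zero.2 (Ne.symm hne)
  have hseg : ∀ t ∈ Icc (0 : ℝ) 1, z₁ + t * d ∈ s := fun t ht => by
    simpa [Complex.real_smul] using hs.add_smul_sub_mem hz₁ hz₂ ht
  have hderiv : ∀ t ∈ Icc (0 : ℝ) 1,
      HasDerivAt (fun t : ℝ => (g (z₁ + t * d) / d).im) (g' (z₁ + t * d)).im t := by
    intro t ht
    have hline : HasDerivAt (fun t : ℝ => z₁ + t * d) d t := by
      simpa using ((hasDerivAt_id t).ofReal_comp.mul_const d).const_add z₁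
    have := ((hg _ (hseg t ht)).comp t hline).div_const d
    rw [mul_div_cancel_right₀ _ hd] at this
    exact Complex.imCLM.hasFDerivAt.comp_hasDerivAt t this
  -- `t ↦ Im (g (z₁ + t d) / d)` has derivative `Im g'`, so it takes different values at 0 and 1.
  have hanti : StrictAntiOn (fun t : ℝ => (g (z₁ + t * d) / d).im) (Icc 0 1) :=
    strictAntiOn_of_hasDerivWithinAt_neg (convex_Icc 0 1)
      (fun t ht => (hderiv t ht).continuousAt.continuousWithinAt)
      (fun t ht => (hderiv t (interior_subset ht)).hasDerivWithinAt)
      (fun t ht => hg' _ (hseg t (interior_subset ht)))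
  have := hanti (left_mem_Icc.2 zero_le_one) (right_mem_Icc.2 zero_le_one) zero_lt_one
  simp [d, heq] at this

theorem Complex.image_ofReal_Ioi (c : ℝ) :
    ((↑) : ℝ → ℂ) '' Ioi c = {w : ℂ | w.im = 0 ∧ c < w.re} := by
  ext w
  constructor
  · rintro ⟨x, hx, rfl⟩
    exact ⟨ofReal_im x, hx⟩
  · rintro ⟨h0, hc⟩
    exact ⟨w.re, hc, Complex.ext rfl h0.symm⟩

theorem Complex.image_conj_setOf_im_pos : conj '' {z : ℂ | 0 < z.im} = {z : ℂ | z.im < 0} := by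
  rw [image_eq_preimage_of_inverse conj_conj conj_conj]
  ext z
  simp

theorem Complex.bijOn_setOf_not_im_eq_zero_and_re_le {α : Type*} {f : α → ℂ}
    {s₁ s₂ s₃ : Set α} {x : ℝ} (h₁ : BijOn f s₁ {z | 0 < z.im}) (h₂ : BijOn f s₂ ((↑) '' Ioi x))
    (h₃ : BijOn f s₃ {z | z.im < 0}) :
    BijOn f (s₁ ∪ s₂ ∪ s₃) {z : ℂ | ¬ (z.im = 0 ∧ z.re ≤ x)} := by
  have hsplit : {z : ℂ | ¬ (z.im = 0 ∧ z.re ≤ x)} =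
      ({z | 0 < z.im} ∪ (↑) '' Ioi x) ∪ {z | z.im < 0} := by
    ext z
    rw [image_ofReal_Ioi]
    rcases lt_trichotomy z.im 0 with h | h | h
    · simp [h, h.ne]
    · simp [h]
    · simp [h, h.ne']
  rw [hsplit]
  refine (h₁.union_of_disjoint h₂ ?_).union_of_disjoint h₃ ?_
  · exact disjoint_left.2 fun z hz ⟨x, _, hx⟩ => by simp [← hx] at hz
  · refine disjoint_union_left.2 ⟨disjoint_left.2 fun z hz hz' => ?_,
      disjoint_left.2 fun z ⟨x, _, hx⟩ hz => ?_⟩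
    · exact lt_asymm (show 0 < z.im from hz) hz'
    · simp [← hx] at hz

noncomputable def sinhExp (a : ℝ) (w : ℂ) : ℂ := (cexp ((1 + a) * w) - cexp ((1 - a) * w)) / 2

noncomputable def realSinhExp (a ξ : ℝ) : ℝ := (rexp ((1 + a) * ξ) - rexp ((1 - a) * ξ)) / 2

section
variable {a ξ₀ : ℝ} {w : ℂ}

theorem sinh_mul_mul_exp_eq_sinhExp (a : ℝ) (w : ℂ) :
    Complex.sinh (a * w) * cexp w = sinhExp a w := by
  rw [Complex.sinh, sinhExp, div_mul_eq_mul_div, sub_mul, ← Complex.exp_add, ← Complex.exp_add]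
  ring_nf

theorem sinhExp_ofReal (a ξ : ℝ) : sinhExp a ξ = realSinhExp a ξ := by
  simp [sinhExp, realSinhExp]

theorem sinhExp_conj (a : ℝ) (w : ℂ) : sinhExp a (conj w) = conj (sinhExp a w) := by
  simp [sinhExp, ← Complex.exp_conj, map_div₀, Complex.conj_ofNat]

theorem im_sinhExp (a : ℝ) (w : ℂ) : (sinhExp a w).im =
    (rexp ((1 + a) * w.re) * Real.sin ((1 + a) * w.im)
      - rexp ((1 - a) * w.re) * Real.sin ((1 - a) * w.im)) / 2 := by
  simp [sinhExp, Complex.exp_im]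

theorem realSinhExp_le_norm_sinhExp (a : ℝ) (w : ℂ) : realSinhExp a w.re ≤ ‖sinhExp a w‖ := by
  rw [sinhExp, norm_div, Complex.norm_two, realSinhExp]
  gcongr
  simpa [Complex.norm_exp] using norm_sub_norm_le (cexp ((1 + a) * w)) (cexp ((1 - a) * w))

theorem norm_sinhExp_le_of_re_nonpos (ha : 0 ≤ a) (hw : w.re ≤ 0) :
    ‖sinhExp a w‖ ≤ rexp ((1 - a) * w.re) := by
  have hexp : rexp ((1 + a) * w.re) ≤ rexp ((1 - a) * w.re) := Real.exp_le_exp.2 (by nlinarith)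
  calc ‖sinhExp a w‖ ≤ (rexp ((1 + a) * w.re) + rexp ((1 - a) * w.re)) / 2 := by
        rw [sinhExp, norm_div, Complex.norm_two]
        gcongr
        simpa [Complex.norm_exp] using norm_sub_le (cexp ((1 + a) * w)) (cexp ((1 - a) * w))
    _ ≤ rexp ((1 - a) * w.re) := by linarith

theorem mul_le_realSinhExp (ha0 : 0 ≤ a) (ha1 : a ≤ 1) {ξ : ℝ} (hξ : 0 ≤ ξ) :
    a * ξ ≤ realSinhExp a ξ := by
  have hsplit : rexp ((1 + a) * ξ) = rexp ((1 - a) * ξ) * rexp (2 * a * ξ) := by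
    rw [← Real.exp_add]; ring_nf
  have h1 : 1 ≤ rexp ((1 - a) * ξ) := Real.one_le_exp (by nlinarith)
  have h2 : 2 * a * ξ + 1 ≤ rexp (2 * a * ξ) := Real.add_one_le_exp _
  have h3 : 1 * (2 * a * ξ) ≤ rexp ((1 - a) * ξ) * (rexp (2 * a * ξ) - 1) :=
    mul_le_mul h1 (by linarith) (by positivity) (by positivity)
  rw [realSinhExp, hsplit]
  linarith

def sinhExpStrip (a : ℝ) : Set ℂ := im ⁻¹' Ioo 0 (π / (1 + a))

noncomputable def sinhExpLog (a : ℝ) (w : ℂ) : ℂ := (1 - a) * w + log (1 - cexp (2 * a * w))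

theorem convex_sinhExpStrip (a : ℝ) : Convex ℝ (sinhExpStrip a) :=
  (convex_Ioo _ _).linear_preimage Complex.imLm

theorem isOpen_sinhExpStrip (a : ℝ) : IsOpen (sinhExpStrip a) :=
  isOpen_Ioo.preimage continuous_im

theorem im_cexp_two_mul_pos (ha0 : 0 < a) (ha1 : a ≤ 1) (hw : w ∈ sinhExpStrip a) :
    0 < (cexp (2 * a * w)).im := by
  obtain ⟨hw0, hw1⟩ := hw
  rw [lt_div_iff₀ (by linarith)] at hw1
  have : 0 < Real.sin (2 * a * w.im) :=
    Real.sin_pos_of_pos_of_lt_pi (by positivity) (by nlinarith)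
  simpa [Complex.exp_im] using mul_pos (Real.exp_pos (2 * a * w.re)) this

theorem cexp_two_mul_ne_one (ha0 : 0 < a) (ha1 : a ≤ 1) (hw : w ∈ sinhExpStrip a) :
    cexp (2 * a * w) ≠ 1 := fun h => by
  simpa [h] using (im_cexp_two_mul_pos ha0 ha1 hw).ne'

theorem cexp_sinhExpLog (h : 1 - cexp (2 * a * w) ≠ 0) :
    cexp (sinhExpLog a w) = -2 * sinhExp a w := by
  rw [sinhExpLog, Complex.exp_add, Complex.exp_log h, sinhExp, mul_sub, ← Complex.exp_add]
  ring_nf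

theorem im_sinhExpLog_mem (ha0 : 0 < a) (ha1 : a ≤ 1) (hw : w ∈ sinhExpStrip a) :
    (sinhExpLog a w).im ∈ Ioo (-π) π := by
  have harg : arg (1 - cexp (2 * a * w)) < 0 := by
    simpa [Complex.arg_neg_iff] using im_cexp_two_mul_pos ha0 ha1 hw
  have hpi := Complex.neg_pi_lt_arg (1 - cexp (2 * a * w))
  obtain ⟨hw0, hw1⟩ := hw
  rw [lt_div_iff₀ (by linarith)] at hw1
  have : (sinhExpLog a w).im = (1 - a) * w.im + arg (1 - cexp (2 * a * w)) := by
    simp [sinhExpLog, Complex.log_im]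
  rw [this]
  constructor <;> nlinarith

theorem hasDerivAt_sinhExpLog (ha0 : 0 < a) (ha1 : a ≤ 1) (hw : w ∈ sinhExpStrip a) :
    HasDerivAt (sinhExpLog a) ((1 + a) + 2 * a / (cexp (2 * a * w) - 1)) w := by
  have hslit : 1 - cexp (2 * a * w) ∈ slitPlane :=
    Or.inr (by simp [(im_cexp_two_mul_pos ha0 ha1 hw).ne'])
  have hlin : HasDerivAt (fun z : ℂ => 2 * a * z) (2 * a) w := by
    simpa using (hasDerivAt_id w).const_mul (2 * (a : ℂ))
  have hd : HasDerivAt (sinhExpLog a)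
      ((1 - a) * 1 + -(cexp (2 * a * w) * (2 * a)) / (1 - cexp (2 * a * w))) w :=
    ((hasDerivAt_id' w).const_mul (1 - (a : ℂ))).add ((hlin.cexp.const_sub 1).clog hslit)
  have hE1 := sub_ne_zero.2 (cexp_two_mul_ne_one ha0 ha1 hw)
  have hE1' := sub_ne_zero.2 (cexp_two_mul_ne_one ha0 ha1 hw).symm
  refine hd.congr_deriv ?_
  generalize cexp (2 * a * w) = E at hE1 hE1'
  field_simp
  ring

theorem im_deriv_sinhExpLog_neg (ha0 : 0 < a) (ha1 : a ≤ 1) (hw : w ∈ sinhExpStrip a) :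
    ((1 + a) + 2 * a / (cexp (2 * a * w) - 1)).im < 0 := by
  have hE := im_cexp_two_mul_pos ha0 ha1 hw
  have hE1 := sub_ne_zero.2 (cexp_two_mul_ne_one ha0 ha1 hw)
  have : ((1 + a) + 2 * a / (cexp (2 * a * w) - 1)).im
      = 2 * a * (-(cexp (2 * a * w)).im / normSq (cexp (2 * a * w) - 1)) := by
    simp [div_eq_mul_inv, Complex.inv_im]
  rw [this, neg_div, mul_neg, neg_lt_zero]
  have := normSq_pos.2 hE1
  positivity

theorem injOn_sinhExp_sinhExpStrip (ha0 : 0 < a) (ha1 : a ≤ 1) :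
    InjOn (sinhExp a) (sinhExpStrip a) := by
  have hlog : InjOn (sinhExpLog a) (sinhExpStrip a) :=
    (convex_sinhExpStrip a).injOn_of_hasDerivAt_im_neg
      (fun _ hw => hasDerivAt_sinhExpLog ha0 ha1 hw)
      (fun _ hw => im_deriv_sinhExpLog_neg ha0 ha1 hw)
  have hexp : ∀ w ∈ sinhExpStrip a, log (-2 * sinhExp a w) = sinhExpLog a w := fun w hw => by
    obtain ⟨h₁, h₂⟩ := im_sinhExpLog_mem ha0 ha1 hw
    rw [← cexp_sinhExpLog (sub_ne_zero.2 (cexp_two_mul_ne_one ha0 ha1 hw).symm),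
      Complex.log_exp h₁ h₂.le]
  intro w₁ hw₁ w₂ hw₂ h
  exact hlog hw₁ hw₂ (by rw [← hexp w₁ hw₁, ← hexp w₂ hw₂, h])

def sinhExpSheet (a : ℝ) : Set ℂ := {w ∈ sinhExpStrip a | 0 < (sinhExp a w).im}

theorem differentiable_sinhExp (a : ℝ) : Differentiable ℂ (sinhExp a) := by
  unfold sinhExp; fun_prop

theorem continuous_sinhExp (a : ℝ) : Continuous (sinhExp a) :=
  (differentiable_sinhExp a).continuous

theorem isOpen_sinhExpSheet (a : ℝ) : IsOpen (sinhExpSheet a) :=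
  (isOpen_sinhExpStrip a).inter
    (isOpen_lt continuous_const (continuous_im.comp (continuous_sinhExp a)))

theorem mk_mem_sinhExpSheet (ha0 : 0 < a) {ξ : ℝ} (hξ : 0 < ξ) :
    (⟨ξ, π / (2 * (1 + a))⟩ : ℂ) ∈ sinhExpSheet a := by
  have hπ := Real.pi_pos
  refine ⟨⟨by positivity, ?_⟩, ?_⟩
  · rw [div_lt_div_iff₀ (by positivity) (by positivity)]
    nlinarith
  · have h1 : (1 + a) * (π / (2 * (1 + a))) = π / 2 := by field_simp
    have h2 : rexp ((1 - a) * ξ) < rexp ((1 + a) * ξ) := Real.exp_lt_exp.2 (by nlinarith)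
    have h3 := Real.sin_le_one ((1 - a) * (π / (2 * (1 + a))))
    have h4 := Real.exp_pos ((1 - a) * ξ)
    rw [im_sinhExp, h1, Real.sin_pi_div_two]
    nlinarith

theorem isOpen_image_sinhExpSheet (ha0 : 0 < a) (ha1 : a ≤ 1) :
    IsOpen (sinhExp a '' sinhExpSheet a) := by
  have hF : AnalyticOnNhd ℂ (sinhExp a) (sinhExpStrip a) :=
    (differentiable_sinhExp a).differentiableOn.analyticOnNhd (isOpen_sinhExpStrip a)
  refine (hF.is_constant_or_isOpen (convex_sinhExpStrip a).isPreconnected).resolve_left ?_ _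
    (sep_subset _ _) (isOpen_sinhExpSheet a)
  rintro ⟨c, hc⟩
  have h₁ := (mk_mem_sinhExpSheet ha0 one_pos).1
  have h₂ := (mk_mem_sinhExpSheet ha0 two_pos).1
  have := injOn_sinhExp_sinhExpStrip ha0 ha1 h₁ h₂ ((hc _ h₁).trans (hc _ h₂).symm)
  norm_num [Complex.ext_iff] at this

theorem mem_sinhExpStrip_of_im_sinhExp_pos (ha0 : 0 ≤ a) (ha1 : a ≤ 1)
    (hw : w.im ∈ Icc 0 (π / (1 + a))) (h : 0 < (sinhExp a w).im) : w ∈ sinhExpStrip a := by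
  rw [im_sinhExp] at h
  refine ⟨lt_of_le_of_ne hw.1 fun h0 => by simp [← h0] at h, lt_of_le_of_ne hw.2 fun hc => ?_⟩
  have h1 : (1 + a) * w.im = π := by rw [hc]; field_simp
  have h2 : 0 ≤ Real.sin ((1 - a) * w.im) := by
    apply Real.sin_nonneg_of_nonneg_of_le_pi
    · exact mul_nonneg (by linarith) hw.1
    · nlinarith [hw.1]
  rw [h1, Real.sin_pi] at h
  nlinarith [Real.exp_pos ((1 - a) * w.re)]

theorem mul_re_le_norm_sinhExp (ha0 : 0 ≤ a) (ha1 : a ≤ 1) : a * w.re ≤ ‖sinhExp a w‖ := by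
  rcases le_total 0 w.re with h | h
  · exact (mul_le_realSinhExp ha0 ha1 h).trans (realSinhExp_le_norm_sinhExp a w)
  · exact (mul_nonpos_of_nonneg_of_nonpos ha0 h).trans (norm_nonneg _)

theorem isCompact_sinhExp_preimage (ha0 : 0 < a) (ha1 : a < 1) {δ : ℝ} (hδ : 0 < δ) (C : ℝ) :
    IsCompact {w | w.im ∈ Icc 0 (π / (1 + a)) ∧ ‖sinhExp a w‖ ∈ Icc δ C} := by
  refine ((isCompact_Icc (a := min 0 (Real.log δ / (1 - a))) (b := C / a)).reProdIm
    (isCompact_Icc (a := 0) (b := π / (1 + a)))).of_isClosed_subset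
    ((isClosed_Icc.preimage continuous_im).inter
      (isClosed_Icc.preimage (continuous_norm.comp (continuous_sinhExp a)))) ?_
  rintro w ⟨him, hδw, hwC⟩
  refine mem_reProdIm.2 ⟨⟨?_, ?_⟩, him⟩
  · rcases le_total 0 w.re with h | h
    · exact (min_le_left _ _).trans h
    · have := hδw.trans (norm_sinhExp_le_of_re_nonpos ha0.le h)
      rw [← Real.log_le_iff_le_exp hδ] at this
      exact (min_le_right _ _).trans ((div_le_iff₀ (by linarith)).2 (by linarith))
  · rw [le_div_iff₀ ha0]
    linarith [mul_re_le_norm_sinhExp (w := w) ha0.le ha1.le]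

theorem mem_image_sinhExpSheet_of_mem_closure (ha0 : 0 < a) (ha1 : a < 1) {z : ℂ}
    (hz : 0 < z.im) (hcl : z ∈ closure (sinhExp a '' sinhExpSheet a)) :
    z ∈ sinhExp a '' sinhExpSheet a := by
  have hr : 0 < ‖z‖ := norm_pos_iff.2 fun h => by simp [h] at hz
  set K := {w | w.im ∈ Icc 0 (π / (1 + a)) ∧ ‖sinhExp a w‖ ∈ Icc (‖z‖ / 2) (2 * ‖z‖)}
  have hK : IsCompact K := isCompact_sinhExp_preimage ha0 ha1 (by positivity) _
  set V : Set ℂ := norm ⁻¹' Ioo (‖z‖ / 2) (2 * ‖z‖)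
  have hV : IsOpen V := isOpen_Ioo.preimage continuous_norm
  have hzV : z ∈ V := ⟨by linarith, by linarith⟩
  have hsub : V ∩ sinhExp a '' sinhExpSheet a ⊆ sinhExp a '' K := by
    rintro _ ⟨hwV, w, hw, rfl⟩
    exact ⟨w, ⟨⟨hw.1.1.le, hw.1.2.le⟩, hwV.1.le, hwV.2.le⟩, rfl⟩
  obtain ⟨v, hvK, rfl⟩ : z ∈ sinhExp a '' K :=
    (hK.image (continuous_sinhExp a)).isClosed.closure_subset_iff.2 hsub
      (hV.inter_closure ⟨hzV, hcl⟩)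
  exact ⟨v, ⟨mem_sinhExpStrip_of_im_sinhExp_pos ha0.le ha1.le hvK.1 hz, hz⟩, rfl⟩

theorem image_sinhExpSheet (ha0 : 0 < a) (ha1 : a < 1) :
    sinhExp a '' sinhExpSheet a = {z | 0 < z.im} := by
  refine Subset.antisymm (by rintro _ ⟨w, hw, rfl⟩; exact hw.2) ?_
  have hw₀ := mk_mem_sinhExpSheet ha0 one_pos
  exact (convex_halfSpace_im_gt 0).isPreconnected.subset_of_closure_inter_subset
    (isOpen_image_sinhExpSheet ha0 ha1.le) ⟨_, hw₀.2, mem_image_of_mem _ hw₀⟩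
    fun z ⟨hcl, hz⟩ => mem_image_sinhExpSheet_of_mem_closure ha0 ha1 hz hcl

theorem bijOn_sinhExpSheet (ha0 : 0 < a) (ha1 : a < 1) :
    BijOn (sinhExp a) (sinhExpSheet a) {z | 0 < z.im} :=
  image_sinhExpSheet ha0 ha1 ▸
    ((injOn_sinhExp_sinhExpStrip ha0 ha1.le).mono (sep_subset _ _)).bijOn_image

theorem hasDerivAt_realSinhExp (a ξ : ℝ) :
    HasDerivAt (realSinhExp a)
      (((1 + a) * rexp ((1 + a) * ξ) - (1 - a) * rexp ((1 - a) * ξ)) / 2) ξ := by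
  have hplus := ((hasDerivAt_id' ξ).const_mul (1 + a)).exp
  have hminus := ((hasDerivAt_id' ξ).const_mul (1 - a)).exp
  exact ((hplus.sub hminus).div_const 2).congr_deriv (by ring)

theorem continuous_realSinhExp (a : ℝ) : Continuous (realSinhExp a) :=
  continuous_iff_continuousAt.2 fun ξ => (hasDerivAt_realSinhExp a ξ).continuousAt

theorem strictMonoOn_realSinhExp (ha0 : 0 < a)
    (hcrit : rexp (2 * a * ξ₀) = (1 - a) / (1 + a)) :
    StrictMonoOn (realSinhExp a) (Ici ξ₀) := by
  refine strictMonoOn_of_hasDerivWithinAt_pos (convex_Ici ξ₀)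
    (continuous_realSinhExp a).continuousOn
    (fun ξ _ => (hasDerivAt_realSinhExp a ξ).hasDerivWithinAt) fun ξ hξ => ?_
  rw [interior_Ici, mem_Ioi] at hξ
  have hgt : (1 - a) / (1 + a) < rexp (2 * a * ξ) := hcrit ▸ Real.exp_lt_exp.2 (by nlinarith)
  rw [div_lt_iff₀ (by linarith)] at hgt
  have hsplit : rexp ((1 + a) * ξ) = rexp ((1 - a) * ξ) * rexp (2 * a * ξ) := by
    rw [← Real.exp_add]; ring_nf
  rw [hsplit]
  nlinarith [Real.exp_pos ((1 - a) * ξ)]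

theorem realSinhExp_of_exp_eq (ha0 : 0 < a) (ha1 : a < 1)
    (hcrit : rexp (2 * a * ξ₀) = (1 - a) / (1 + a)) :
    realSinhExp a ξ₀ = -(a / (1 + a)) * ((1 - a) / (1 + a)) ^ ((1 - a) / (2 * a)) := by
  have hr : 0 < (1 - a) / (1 + a) := div_pos (by linarith) (by linarith)
  have hpow : ((1 - a) / (1 + a)) ^ ((1 - a) / (2 * a)) = rexp ((1 - a) * ξ₀) := by
    rw [Real.rpow_def_of_pos hr, ← hcrit, Real.log_exp]
    field_simp
  have hsplit : rexp ((1 + a) * ξ₀) = rexp ((1 - a) * ξ₀) * ((1 - a) / (1 + a)) := by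
    rw [← hcrit, ← Real.exp_add]; ring_nf
  rw [hpow, realSinhExp, hsplit]
  field_simp
  ring

theorem tendsto_realSinhExp_atTop (ha0 : 0 < a) (ha1 : a ≤ 1) :
    Tendsto (realSinhExp a) atTop atTop :=
  tendsto_atTop_mono' atTop
    ((eventually_ge_atTop 0).mono fun _ hξ => mul_le_realSinhExp ha0.le ha1 hξ)
    (tendsto_id.const_mul_atTop ha0)

theorem bijOn_sinhExp_image_ofReal_Ioi (ha0 : 0 < a) (ha1 : a < 1)
    (hcrit : rexp (2 * a * ξ₀) = (1 - a) / (1 + a)) :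
    BijOn (sinhExp a) ((↑) '' Ioi ξ₀)
      ((↑) '' Ioi (-(a / (1 + a)) * ((1 - a) / (1 + a)) ^ ((1 - a) / (2 * a)))) := by
  refine Function.Semiconj.bijOn_image (fun ξ => (sinhExp_ofReal a ξ).symm) ?_
    ofReal_injective.injOn
  rw [← realSinhExp_of_exp_eq ha0 ha1 hcrit]
  exact (strictMonoOn_realSinhExp ha0 hcrit).bijOn_Ioi
    (continuous_realSinhExp a).continuousOn (tendsto_realSinhExp_atTop ha0 ha1.le)

theorem bijOn_sinhExp_image_conj_sinhExpSheet (ha0 : 0 < a) (ha1 : a < 1) :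
    BijOn (sinhExp a) (conj '' sinhExpSheet a) {z | z.im < 0} :=
  image_conj_setOf_im_pos ▸ Function.Semiconj.bijOn_image (fun w => (sinhExp_conj a w).symm)
    (bijOn_sinhExpSheet ha0 ha1) (RingHom.injective _).injOn

theorem sinhExpSheet_eq (a : ℝ) : sinhExpSheet a =
    {w : ℂ | 0 < w.im ∧ w.im < π / (1 + a) ∧
      rexp ((1 - a) * w.re) * Real.sin ((1 - a) * w.im) <
        rexp ((1 + a) * w.re) * Real.sin ((1 + a) * w.im)} := by
  ext w
  simp only [sinhExpSheet, sinhExpStrip, im_sinhExp, mem_ofPred_eq, mem_preimage, mem_Ioo]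
  constructor
  · rintro ⟨⟨h₁, h₂⟩, h₃⟩
    exact ⟨h₁, h₂, by linarith⟩
  · rintro ⟨h₁, h₂, h₃⟩
    exact ⟨⟨h₁, h₂⟩, by linarith⟩

theorem image_conj_sinhExpSheet (a : ℝ) : conj '' sinhExpSheet a =
    {w : ℂ | -(π / (1 + a)) < w.im ∧ w.im < 0 ∧
      rexp ((1 + a) * w.re) * Real.sin ((1 + a) * w.im) <
        rexp ((1 - a) * w.re) * Real.sin ((1 - a) * w.im)} := by
  rw [image_eq_preimage_of_inverse conj_conj conj_conj, sinhExpSheet_eq]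
  ext w
  simp only [mem_preimage, mem_ofPred_eq, conj_re, conj_im, mul_neg, Real.sin_neg]
  constructor <;> rintro ⟨h₁, h₂, h₃⟩ <;> exact ⟨by linarith, by linarith, by linarith⟩

end

theorem stmt_12 (a : ℝ) (ha0 : 0 < a) (ha1 : a < 1)
    (f : ℂ → ℂ) (hf : ∀ w : ℂ, f w = Complex.sinh (a * w) * Complex.exp w)
    (ξa : ℝ) (hξa : ξa = (1 / (2 * a)) * Real.log ((1 - a) / (1 + a)))
    (xa : ℝ) (hxa : xa = -(a / (1 + a)) * ((1 - a) / (1 + a)) ^ ((1 - a) / (2 * a)))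
    (Ω₀ : Set ℂ)
    (hΩ₀ : Ω₀ =
      {w : ℂ | 0 < w.im ∧ w.im < Real.pi / (1 + a) ∧
          Real.exp ((1 - a) * w.re) * Real.sin ((1 - a) * w.im) <
            Real.exp ((1 + a) * w.re) * Real.sin ((1 + a) * w.im)} ∪
        {w : ℂ | w.im = 0 ∧ ξa < w.re} ∪
        {w : ℂ | -(Real.pi / (1 + a)) < w.im ∧ w.im < 0 ∧
          Real.exp ((1 + a) * w.re) * Real.sin ((1 + a) * w.im) <
            Real.exp ((1 - a) * w.re) * Real.sin ((1 - a) * w.im)}) :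
    Set.BijOn f Ω₀ {z : ℂ | ¬ (z.im = 0 ∧ z.re ≤ xa)} := by
  have hcrit : rexp (2 * a * ξa) = (1 - a) / (1 + a) := by
    rw [hξa, ← mul_assoc, mul_one_div_cancel (by positivity), one_mul,
      Real.exp_log (div_pos (by linarith) (by linarith))]
  rw [funext fun w => (hf w).trans (sinh_mul_mul_exp_eq_sinhExp a w), hΩ₀, hxa,
    ← sinhExpSheet_eq, ← image_ofReal_Ioi, ← image_conj_sinhExpSheet]
  exact bijOn_setOf_not_im_eq_zero_and_re_le (bijOn_sinhExpSheet ha0 ha1)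
    (bijOn_sinhExp_image_ofReal_Ioi ha0 ha1 hcrit) (bijOn_sinhExp_image_conj_sinhExpSheet ha0 ha1)
end

section
/- Let b ∈ ℝ. If sin((1+a)b) = 0 and sin((1−a)b) ≠ 0, then Ξ(η) → +∞ as η → b within dom(Ξ). If instead sin((1−a)b) = 0 and sin((1+a)b) ≠ 0, then Ξ(η) → −∞ as η → b within dom(Ξ). -/
/-! On `dom(Ξ)` the ratio `sin((1-a)η) / sin((1+a)η)` is positive, so near a zero of the
denominator only it tends to `+∞`, and near a zero of the numerator only it tends to `0⁺`.
Taking `log` and multiplying by `1/(2a) > 0` preserves both limits. -/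

open Real Filter Topology

section RatioLimits

variable {α : Type*} {l : Filter α} {f g : α → ℝ}

theorem tendsto_div_nhdsGT_zero_of_tendsto_zero {d : ℝ} (hf : Tendsto f l (𝓝 0))
    (hg : Tendsto g l (𝓝 d)) (hd : d ≠ 0) (hpos : ∀ᶠ x in l, 0 < f x / g x) :
    Tendsto (fun x => f x / g x) l (𝓝[>] 0) := by
  refine tendsto_nhdsWithin_iff.mpr ⟨?_, hpos⟩
  exact zero_div d ▸ hf.div hg hd

theorem tendsto_div_atTop_of_tendsto_zero {c : ℝ} (hf : Tendsto f l (𝓝 c)) (hc : c ≠ 0)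
    (hg : Tendsto g l (𝓝 0)) (hpos : ∀ᶠ x in l, 0 < f x / g x) :
    Tendsto (fun x => f x / g x) l atTop := by
  have hinv : Tendsto (fun x => g x / f x) l (𝓝[>] 0) :=
    tendsto_div_nhdsGT_zero_of_tendsto_zero hg hf hc
      (hpos.mono fun x hx => by rwa [← inv_div, inv_pos])
  exact hinv.inv_tendsto_nhdsGT_zero.congr fun x => inv_div _ _

end RatioLimits

theorem stmt_16_general (a : ℝ) (ha0 : 0 < a)
    (Ξ : ℝ → ℝ)
    (hΞ : ∀ η : ℝ, Ξ η = (1 / (2 * a)) * Real.log (Real.sin ((1 - a) * η) / Real.sin ((1 + a) * η)))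
    (domΞ : Set ℝ)
    (hdom : domΞ = {η : ℝ | 0 < Real.sin ((1 - a) * η) / Real.sin ((1 + a) * η)})
    (b : ℝ) :
    (Real.sin ((1 + a) * b) = 0 → Real.sin ((1 - a) * b) ≠ 0 →
        Filter.Tendsto Ξ (nhdsWithin b domΞ) Filter.atTop) ∧
      (Real.sin ((1 - a) * b) = 0 → Real.sin ((1 + a) * b) ≠ 0 →
        Filter.Tendsto Ξ (nhdsWithin b domΞ) Filter.atBot) := by
  have hsin (k : ℝ) : Tendsto (fun η => sin (k * η)) (𝓝[domΞ] b) (𝓝 (sin (k * b))) :=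
    ((continuous_sin.comp (continuous_const_mul k)).tendsto b).mono_left nhdsWithin_le_nhds
  have hpos : ∀ᶠ η in 𝓝[domΞ] b, 0 < sin ((1 - a) * η) / sin ((1 + a) * η) := by
    subst hdom
    exact self_mem_nhdsWithin
  have hc : 0 < 1 / (2 * a) := by positivity
  rw [funext hΞ]
  constructor
  · intro hg hf
    have hratio := tendsto_div_atTop_of_tendsto_zero (hsin _) hf (hg ▸ hsin _) hpos
    exact (tendsto_log_atTop.comp hratio).const_mul_atTop hc
  · intro hf hg
    have hratio := tendsto_div_nhdsGT_zero_of_tendsto_zero (hf ▸ hsin _) (hsin _) hg hpos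
    exact (tendsto_const_mul_atBot_of_pos hc).mpr (tendsto_log_nhdsGT_zero.comp hratio)

theorem stmt_16 (a : ℝ) (ha0 : 0 < a) (ha1 : a < 1)
    (Ξ : ℝ → ℝ)
    (hΞ : ∀ η : ℝ, Ξ η = (1 / (2 * a)) * Real.log (Real.sin ((1 - a) * η) / Real.sin ((1 + a) * η)))
    (domΞ : Set ℝ)
    (hdom : domΞ = {η : ℝ | 0 < Real.sin ((1 - a) * η) / Real.sin ((1 + a) * η)})
    (b : ℝ) :
    (Real.sin ((1 + a) * b) = 0 → Real.sin ((1 - a) * b) ≠ 0 →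
        Filter.Tendsto Ξ (nhdsWithin b domΞ) Filter.atTop) ∧
      (Real.sin ((1 - a) * b) = 0 → Real.sin ((1 + a) * b) ≠ 0 →
        Filter.Tendsto Ξ (nhdsWithin b domΞ) Filter.atBot) :=
  stmt_16_general a ha0 Ξ hΞ domΞ hdom b
end

section
/- Let a = 1/3, so f(w) = sinh(w/3)·e^{w}. For every z ∈ ℂ: if u = 1/2 + (2z + 1/4)^{1/2} ≠ 0 (principal square root) and w = (3/2)·Log(u) (principal logarithm), then f(w) = z; and if ũ = 1/2 − (2z + 1/4)^{1/2} ≠ 0 and w̃ = (3/2)·Log(ũ), then f(w̃) = z. (These are the two explicit branches ψ(z) = (3/2)·log(1/2 + √(2z+1/4)) and ψ̃(z) = (3/2)·log(1/2 − √(2z+1/4)) of the inverse of f.) -/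
open Complex

/-! The substitution `u = exp (2w/3)` turns `sinh (w/3) * exp w` into `(u² - u)/2`, so inverting `f`
amounts to solving the quadratic `u² - u = 2z`, whose roots are `1/2 ± √(2z + 1/4)`. -/

theorem Complex.sinh_div_three_mul_exp (w : ℂ) :
    sinh (w / 3) * exp w = (exp (2 * w / 3) ^ 2 - exp (2 * w / 3)) / 2 := by
  rw [sinh, div_mul_eq_mul_div, sub_mul, ← exp_add, ← exp_add, ← exp_nat_mul]
  ring_nf

theorem Complex.sinh_div_three_mul_exp_of_log {u : ℂ} (hu : u ≠ 0) :
    sinh (3 / 2 * log u / 3) * exp (3 / 2 * log u) = (u ^ 2 - u) / 2 := by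
  have h : 2 * (3 / 2 * log u) / 3 = log u := by ring
  rw [sinh_div_three_mul_exp, h, exp_log hu]

theorem stmt_17
    (f : ℂ → ℂ) (hf : ∀ w : ℂ, f w = Complex.sinh (w / 3) * Complex.exp w) :
    ∀ z : ℂ,
      ((1 / 2 + (2 * z + 1 / 4) ^ ((1 : ℂ) / 2) ≠ 0 →
          f ((3 / 2) * Complex.log (1 / 2 + (2 * z + 1 / 4) ^ ((1 : ℂ) / 2))) = z) ∧
        (1 / 2 - (2 * z + 1 / 4) ^ ((1 : ℂ) / 2) ≠ 0 →
          f ((3 / 2) * Complex.log (1 / 2 - (2 * z + 1 / 4) ^ ((1 : ℂ) / 2))) = z)) := by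
  intro z
  have hs : ((2 * z + 1 / 4) ^ ((1 : ℂ) / 2)) ^ 2 = 2 * z + 1 / 4 := by simp
  refine ⟨fun hu => ?_, fun hu => ?_⟩ <;>
  · rw [hf, sinh_div_three_mul_exp_of_log hu]
    linear_combination hs / 2
end
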